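/- Let ξ : 𝕋ᵈ → ℝᵈ be a smooth vector field and u : 𝕋ᵈ → ℝᵈ smooth. Then the composition of transpose Lie derivatives satisfies, componentwise, (ℒᵀ_ξ(ℒᵀ_ξ u))^α = ∂_i(ξ^i ξ^j ∂_j u^α) - (div ξ)(ξ ⬝ ∇ u^α) + 2 ξ^i (∂_α ξ^j)(∂_i u^j) + ((∂_α ξ^i)(∂_i ξ^β) + ξ^i ∂²_{iα} ξ^β) u^β, where (ℒᵀ_ξ u)^i = ξ^j ∂_j u^i + (∂_i ξ^j) u^j and repeated indices are summed. -/

import Mathlib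

/-- `pd f x j` is the partial derivative `∂ⱼ f (x)`. -/
noncomputable def pd {d : ℕ} (f : (Fin d → ℝ) → ℝ) (x : Fin d → ℝ) (j : Fin d) : ℝ :=
  fderiv ℝ f x (Pi.single j 1)

/-- The transpose Lie derivative `(ℒᵀ_ξ u)ⁱ = ξʲ ∂ⱼ uⁱ + (∂ᵢ ξʲ) uʲ`. -/
noncomputable def lieT {d : ℕ} (ξ u : (Fin d → ℝ) → Fin d → ℝ) :
    (Fin d → ℝ) → Fin d → ℝ :=
  fun x i => (∑ j, ξ x j * pd (fun y => u y i) x j) + ∑ j, pd (fun y => ξ y j) x i * u x j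

section helpers
variable {d : ℕ} {f g : (Fin d → ℝ) → ℝ} {x : Fin d → ℝ} {i : Fin d}

lemma pd_smooth (hf : ContDiff ℝ (⊤ : ℕ∞) f) (j : Fin d) :
    ContDiff ℝ (⊤ : ℕ∞) (fun y => pd f y j) :=
  (hf.fderiv_right (le_refl _)).clm_apply contDiff_const

lemma pd_add (hf : DifferentiableAt ℝ f x) (hg : DifferentiableAt ℝ g x) :
    pd (fun y => f y + g y) x i = pd f x i + pd g x i := by
  simp [pd, fderiv_fun_add hf hg]

lemma pd_mul (hf : DifferentiableAt ℝ f x) (hg : DifferentiableAt ℝ g x) :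
    pd (fun y => f y * g y) x i = pd f x i * g x + f x * pd g x i := by
  simp [pd, fderiv_fun_mul hf hg]; ring

lemma pd_sum {s : Finset (Fin d)} {F : Fin d → (Fin d → ℝ) → ℝ}
    (hF : ∀ j ∈ s, DifferentiableAt ℝ (F j) x) :
    pd (fun y => ∑ j ∈ s, F j y) x i = ∑ j ∈ s, pd (F j) x i := by
  simp [pd, fderiv_fun_sum hF]
end helpers



open Finset in
lemma alg (d : ℕ) (α : Fin d) (A C U : Fin d → ℝ) (B D E F : Fin d → Fin d → ℝ) :
    (∑ j, A j * ((∑ k, (B j k * C k + A k * E j k)) + ∑ k, (F j k * U k + B α k * D j k)))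
      + ∑ j, B α j * ((∑ k, A k * D k j) + ∑ k, B j k * U k)
    = (∑ i, ∑ j, ((B i i * A j + A i * B i j) * C j + A i * A j * E i j))
      - (∑ i, B i i) * (∑ j, A j * C j)
      + 2 * (∑ i, ∑ j, A i * B α j * D i j)
      + ∑ β, ((∑ i, B α i * B i β) + ∑ i, A i * F i β) * U β := by
  have h1 : ∑ x, ∑ y, B α x * A y * D y x = ∑ i, ∑ j, A i * B α j * D i j := by
    rw [Finset.sum_comm]
    exact Finset.sum_congr rfl fun i _ => Finset.sum_congr rfl fun j _ => by ring
  have h2 : ∑ x, ∑ y, B α x * B x y * U y = ∑ β, (∑ i, B α i * B i β) * U β := by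
    simp only [Finset.sum_mul]
    rw [Finset.sum_comm]
  have h3 : ∑ x, ∑ y, A x * F x y * U y = ∑ β, (∑ i, A i * F i β) * U β := by
    simp only [Finset.sum_mul]
    rw [Finset.sum_comm]
  have h4 : ∑ i, (∑ j, B j j) * A i * C i = ∑ x, ∑ y, B x x * A y * C y := by
    simp only [Finset.sum_mul]
    rw [Finset.sum_comm]
  simp only [mul_add, add_mul, Finset.mul_sum, Finset.sum_add_distrib, two_mul]
  ring_nf
  ring_nf at h1 h2 h3 h4
  linarith [h1, h2, h3, h4]

/-- The composition of transpose Lie derivatives satisfies, componentwise,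
`(ℒᵀ_ξ(ℒᵀ_ξ u))^α = ∂ᵢ(ξⁱξʲ∂ⱼu^α) - (div ξ)(ξ ⬝ ∇u^α) + 2ξⁱ(∂_α ξʲ)(∂ᵢuʲ)
  + ((∂_α ξⁱ)(∂ᵢξ^β) + ξⁱ∂²_{iα}ξ^β) u^β`. -/
theorem stmt11 (d : ℕ) (ξ u : (Fin d → ℝ) → Fin d → ℝ)
    (hξ : ContDiff ℝ (⊤ : ℕ∞) ξ) (hu : ContDiff ℝ (⊤ : ℕ∞) u) (x : Fin d → ℝ) (α : Fin d) :
    lieT ξ (lieT ξ u) x α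
      = (∑ i, pd (fun y => ∑ j, ξ y i * ξ y j * pd (fun z => u z α) y j) x i)
        - (∑ i, pd (fun y => ξ y i) x i) * (∑ j, ξ x j * pd (fun y => u y α) x j)
        + 2 * ∑ i, ∑ j, ξ x i * pd (fun y => ξ y j) x α * pd (fun z => u z j) x i
        + ∑ β, ((∑ i, pd (fun y => ξ y i) x α * pd (fun z => ξ z β) x i)
            + ∑ i, ξ x i * pd (fun y => pd (fun z => ξ z β) y α) x i) * u x β := by
  have hξk : ∀ k, ContDiff ℝ (⊤ : ℕ∞) fun y => ξ y k := fun k => contDiff_pi.mp hξ k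
  have huk : ∀ k, ContDiff ℝ (⊤ : ℕ∞) fun y => u y k := fun k => contDiff_pi.mp hu k
  have dξ : ∀ k y, DifferentiableAt ℝ (fun z => ξ z k) y :=
    fun k y => ((hξk k).differentiable (by simp)) y
  have du : ∀ k y, DifferentiableAt ℝ (fun z => u z k) y :=
    fun k y => ((huk k).differentiable (by simp)) y
  have dpdu : ∀ m k y, DifferentiableAt ℝ (fun z => pd (fun w => u w m) z k) y :=
    fun m k y => ((pd_smooth (huk m) k).differentiable (by simp)) y
  have dpdξ : ∀ m k y, DifferentiableAt ℝ (fun z => pd (fun w => ξ w m) z k) y :=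
    fun m k y => ((pd_smooth (hξk m) k).differentiable (by simp)) y
  have hK : ∀ j, pd (fun y => (∑ k, ξ y k * pd (fun z => u z α) y k)
        + ∑ k, pd (fun z => ξ z k) y α * u y k) x j
      = (∑ k, (pd (fun z => ξ z k) x j * pd (fun z => u z α) x k
          + ξ x k * pd (fun z => pd (fun w => u w α) z k) x j))
        + ∑ k, (pd (fun z => pd (fun w => ξ w k) z α) x j * u x k
          + pd (fun z => ξ z k) x α * pd (fun z => u z k) x j) := by
    intro j
    rw [pd_add (DifferentiableAt.fun_sum fun k _ => ((dξ k x).fun_mul (dpdu α k x)))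
        (DifferentiableAt.fun_sum fun k _ => ((dpdξ k α x).fun_mul (du k x))),
      pd_sum (fun k _ => (dξ k x).fun_mul (dpdu α k x)),
      pd_sum (fun k _ => (dpdξ k α x).fun_mul (du k x))]
    congr 1
    · exact Finset.sum_congr rfl fun k _ => pd_mul (dξ k x) (dpdu α k x)
    · exact Finset.sum_congr rfl fun k _ => pd_mul (dpdξ k α x) (du k x)
  have hR : ∀ i, pd (fun y => ∑ j, ξ y i * ξ y j * pd (fun z => u z α) y j) x i
      = ∑ j, ((pd (fun z => ξ z i) x i * ξ x j + ξ x i * pd (fun z => ξ z j) x i)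
            * pd (fun z => u z α) x j
          + ξ x i * ξ x j * pd (fun z => pd (fun w => u w α) z j) x i) := by
    intro i
    rw [pd_sum (fun j _ => (((dξ i x).fun_mul (dξ j x)).fun_mul (dpdu α j x)))]
    refine Finset.sum_congr rfl fun j _ => ?_
    rw [pd_mul ((dξ i x).fun_mul (dξ j x)) (dpdu α j x), pd_mul (dξ i x) (dξ j x)]
  simp only [lieT]
  simp only [hK, hR]
  exact alg d α (fun i => ξ x i) (fun k => pd (fun z => u z α) x k) (fun k => u x k)
    (fun i j => pd (fun z => ξ z j) x i) (fun i j => pd (fun z => u z j) x i)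
    (fun i j => pd (fun z => pd (fun w => u w α) z j) x i)
    (fun i j => pd (fun z => pd (fun w => ξ w j) z α) x i)
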